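/- arXiv:2103.02135 — 3 statements merged into one kernel-verified Lean document; each statement's English description precedes it below -/
import Mathlib

section
/- The generating function identity: the number of pairs of partitions into distinct odd parts of total size n, summed with weight q^n, equals (1/∏_{k≥1}(1−q^{2k})) · Σ_{m∈ℤ} q^{m²}. Equivalently, Σ_n pod_distinct-odd-pairs(n) q^n = (Σ_{m=−∞}^{∞} q^{m²}) / (q²; q²)_∞. -/
/-- A multiset of natural numbers represents a partition if all parts are positive. -/
def IsPartitionM (m : Multiset ℕ) : Prop := ∀ i ∈ m, 0 < i

/-- A partition all of whose parts are even (and positive). -/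
def IsEvenPartition (m : Multiset ℕ) : Prop := IsPartitionM m ∧ ∀ i ∈ m, Even i

/-- A staircase partition: parts k, k-1, ..., 2, 1 (possibly empty). -/
def IsStaircase (m : Multiset ℕ) : Prop := ∃ k : ℕ, m = (Multiset.range k).map (· + 1)

/-- An odd staircase: parts 2k-1, 2k-3, ..., 3, 1 (possibly empty); its size is k². -/
def IsOddStaircase (m : Multiset ℕ) : Prop := ∃ k : ℕ, m = (Multiset.range k).map (fun i => 2 * i + 1)

/-- A partition into distinct odd parts. -/
def IsDistinctOdd (m : Multiset ℕ) : Prop := m.Nodup ∧ ∀ i ∈ m, Odd i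

/-- A partition whose odd parts are distinct (even parts unrestricted). -/
def IsPOD (m : Multiset ℕ) : Prop := IsPartitionM m ∧ ∀ i ∈ m, Odd i → m.count i ≤ 1

/-- A partition into distinct parts, all divisible by 3. -/
def IsDistinctMul3 (m : Multiset ℕ) : Prop := IsPartitionM m ∧ m.Nodup ∧ ∀ i ∈ m, 3 ∣ i

/-- An overpartition: a partition together with a set of overlined part sizes,
each of which must occur in the partition. -/
def IsOverpartition (x : Multiset ℕ × Finset ℕ) : Prop :=
  IsPartitionM x.1 ∧ ∀ s ∈ x.2, s ∈ x.1

/-- A partition with designated summands: a partition together with, for each part size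
occurring with multiplicity `c`, a choice of designated occurrence in `{1, ..., c}`
(and `0` for non-occurring sizes). -/
def IsDesignated (x : Multiset ℕ × (ℕ → ℕ)) : Prop :=
  IsPartitionM x.1 ∧ ∀ s : ℕ,
    (0 < x.1.count s → 1 ≤ x.2 s ∧ x.2 s ≤ x.1.count s) ∧ (x.1.count s = 0 → x.2 s = 0)


/-!
A partition into `k` distinct odd parts is `2 a + (1, 3, …, 2k - 1)` for a unique multiset `a` of
`k` naturals, so its size is `2 |a| + k²`. Given two such multisets `a`, `b` of sizes `k`, `l`,
glue them into one partition `g`: a `k × l` rectangle with the parts of `a` attached to the right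
of its rows and the conjugate of `b` attached below it. Then `|g| = |a| + |b| + k l`, hence
`(2 |a| + k²) + (2 |b| + l²) = (k - l)² + 2 |g|`, and `(a, b) ↦ (k - l, g)` is a bijection onto
`ℤ × partitions`: the rectangle is recovered from `g` and `m = k - l` as the largest `(l + m) × l`
rectangle fitting in the Young diagram of `g`. So `D(n)` counts the pairs `(m, g)` with
`m² + 2 |g| = n`, and the finite product `∏_{k ≤ N} (1 - q^{2k})` cancels the partition factor up
to degree `N`.
-/

open PowerSeries

section MultisetOfWeight

variable {α : Type*} (w : α → ℕ)

theorem card_weight_add_eq (P : Multiset α → Prop) (k n : ℕ) :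
    Nat.card {g : Multiset α // P g ∧ (g.map w).sum + k = n} =
      if k ≤ n then Nat.card {g : Multiset α // P g ∧ (g.map w).sum = n - k} else 0 := by
  split_ifs with hkn
  · exact Nat.card_congr (Equiv.subtypeEquivRight fun g => and_congr_right fun _ => by omega)
  · have : IsEmpty {g : Multiset α // P g ∧ (g.map w).sum + k = n} :=
      ⟨fun g => by have := g.prop.2; omega⟩
    exact Nat.card_of_isEmpty

variable [DecidableEq α]

abbrev MultisetOfWeight (s : Finset α) (n : ℕ) : Type _ :=
  {g : Multiset α // (∀ a ∈ g, a ∈ s) ∧ (g.map w).sum = n}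

theorem Multiset.count_le_sum_map_of_pos {g : Multiset α} {a : α} (ha : 0 < w a) :
    g.count a ≤ (g.map w).sum := by
  by_cases hag : a ∈ g
  · calc g.count a ≤ g.count a • w a := Nat.le_mul_of_pos_right _ ha
      _ ≤ (g.map w).sum := by
        rw [Finset.sum_multiset_map_count]
        exact Finset.single_le_sum (f := fun x => g.count x • w x) (fun _ _ => Nat.zero_le _)
          (Multiset.mem_toFinset.2 hag)
  · simp [Multiset.count_eq_zero.2 hag]

theorem finite_multisetOfWeight {s : Finset α} (hw : ∀ a ∈ s, 0 < w a) (n : ℕ) :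
    Finite (MultisetOfWeight w s n) := by
  refine Finite.of_injective (β := Set.Iic (n • s.val))
    (fun g => ⟨g.val, Multiset.le_iff_count.2 fun a => ?_⟩) fun g g' h => Subtype.ext ?_
  · obtain ⟨g, hgs, rfl⟩ := g
    by_cases hag : a ∈ g
    · rw [Multiset.count_nsmul, Multiset.count_eq_one_of_mem s.nodup (hgs a hag), mul_one]
      exact Multiset.count_le_sum_map_of_pos w (hw a (hgs a hag))
    · simp [Multiset.count_eq_zero.2 hag]
  · simpa using congrArg (fun x : Set.Iic (n • s.val) => x.val) h

def multisetOfWeightInsertEquiv {s : Finset α} {a : α} (has : a ∉ s) (n : ℕ) :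
    MultisetOfWeight w (insert a s) n ≃
      MultisetOfWeight w s n ⊕
        {g : Multiset α // (∀ b ∈ g, b ∈ insert a s) ∧ (g.map w).sum + w a = n} where
  toFun g :=
    if hag : a ∈ g.val then
      .inr ⟨g.val.erase a, fun b hb => g.prop.1 b (Multiset.mem_of_mem_erase hb), by
        rw [add_comm, Multiset.sum_map_erase hag, g.prop.2]⟩
    else
      .inl ⟨g.val, fun b hb => (Finset.mem_insert.1 (g.prop.1 b hb)).resolve_left
        (fun hba => hag (hba ▸ hb)), g.prop.2⟩
  invFun
    | .inl g => ⟨g.val, fun b hb => Finset.mem_insert_of_mem (g.prop.1 b hb), g.prop.2⟩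
    | .inr g => ⟨a ::ₘ g.val, by
        simpa [Multiset.sum_cons, add_comm] using g.prop⟩
  left_inv g := by
    by_cases hag : a ∈ g.val
    · simp [hag, Multiset.cons_erase hag]
    · simp [hag]
  right_inv
    | .inl g => by
      have hag : a ∉ g.val := fun hag => has (g.prop.1 a hag)
      simp [hag]
    | .inr g => by simp

theorem card_multisetOfWeight_insert {s : Finset α} {a : α} (hw : ∀ b ∈ insert a s, 0 < w b)
    (has : a ∉ s) (n : ℕ) :
    Nat.card (MultisetOfWeight w (insert a s) n) = Nat.card (MultisetOfWeight w s n) +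
        Nat.card {g : Multiset α // (∀ b ∈ g, b ∈ insert a s) ∧ (g.map w).sum + w a = n} := by
  have := finite_multisetOfWeight w (fun b hb => hw b (Finset.mem_insert_of_mem hb)) n
  have := finite_multisetOfWeight w hw (n - w a)
  have : Finite {g : Multiset α // (∀ b ∈ g, b ∈ insert a s) ∧ (g.map w).sum + w a = n} :=
    Finite.of_injective (fun g => (⟨g.val, g.prop.1, by omega⟩ : MultisetOfWeight w _ (n - w a)))
      fun g g' h => Subtype.ext (by simpa using h)
  rw [Nat.card_congr (multisetOfWeightInsertEquiv w has n), Nat.card_sum]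

theorem mk_card_multisetOfWeight_mul_prod {R : Type*} [CommRing R] {s : Finset α}
    (hw : ∀ a ∈ s, 0 < w a) :
    mk (fun n => (Nat.card (MultisetOfWeight w s n) : R)) * ∏ a ∈ s, (1 - X ^ w a) = 1 := by
  induction s using Finset.induction_on with
  | empty =>
    have hzero (g : Multiset α) : (∀ a ∈ g, a ∈ (∅ : Finset α)) ↔ g = 0 := by
      simp [Multiset.eq_zero_iff_forall_notMem]
    ext n
    simp only [MultisetOfWeight, hzero, Finset.prod_empty, mul_one, coeff_mk, coeff_one]
    rcases eq_or_ne n 0 with rfl | hn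
    · have : Unique {g : Multiset α // g = 0 ∧ (g.map w).sum = 0} :=
        ⟨⟨⟨0, rfl, by simp⟩⟩, fun g => Subtype.ext g.prop.1⟩
      simp
    · have : IsEmpty {g : Multiset α // g = 0 ∧ (g.map w).sum = n} :=
        ⟨fun ⟨g, hg, hgn⟩ => hn (by simp [← hgn, hg])⟩
      simp [hn]
  | insert a s has ih =>
    set F := mk fun n => (Nat.card (MultisetOfWeight w (insert a s) n) : R)
    have hF : F = mk (fun n => (Nat.card (MultisetOfWeight w s n) : R)) + X ^ w a * F := by
      ext n
      rw [map_add, coeff_X_pow_mul', coeff_mk, coeff_mk, coeff_mk,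
        card_multisetOfWeight_insert w hw has, card_weight_add_eq]
      split_ifs <;> push_cast <;> rfl
    have hF' : F * (1 - X ^ w a) = mk (fun n => (Nat.card (MultisetOfWeight w s n) : R)) := by
      linear_combination hF
    rw [Finset.prod_insert has, ← mul_assoc, hF']
    exact ih fun b hb => hw b (Finset.mem_insert_of_mem hb)

end MultisetOfWeight

section ProductCount

variable {α β : Type*} (f : α → ℕ) (g : β → ℕ)

open Finset in
def equivSigmaAntidiagonal (n : ℕ) :
    {p : α × β // f p.1 + g p.2 = n} ≃
      Σ ij : antidiagonal n, {a // f a = ij.1.1} × {b // g b = ij.1.2} where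
  toFun p := ⟨⟨(f p.1.1, g p.1.2), mem_antidiagonal.2 p.2⟩, ⟨p.1.1, rfl⟩, ⟨p.1.2, rfl⟩⟩
  invFun x := ⟨(x.2.1, x.2.2), by rw [x.2.1.2, x.2.2.2]; exact mem_antidiagonal.1 x.1.2⟩
  left_inv _ := rfl
  right_inv := by
    rintro ⟨⟨⟨i, j⟩, hij⟩, ⟨a, ha⟩, ⟨b, hb⟩⟩
    change f a = i at ha
    change g b = j at hb
    subst ha hb
    rfl

open Finset in
theorem mk_card_add_eq_mul {R : Type*} [CommSemiring R] [∀ i, Finite {a // f a = i}]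
    [∀ j, Finite {b // g b = j}] :
    mk (fun n => (Nat.card {p : α × β // f p.1 + g p.2 = n} : R)) =
      mk (fun i => (Nat.card {a // f a = i} : R)) *
        mk (fun j => (Nat.card {b // g b = j} : R)) := by
  ext n
  rw [coeff_mul, coeff_mk, Nat.card_congr (equivSigmaAntidiagonal f g n), Nat.card_sigma,
    ← sum_coe_sort (antidiagonal n)]
  push_cast [Nat.card_prod]
  simp only [coeff_mk]

end ProductCount

instance (a : ℕ) : Finite {m : ℤ // m.natAbs ^ 2 = a} :=
  Set.Finite.to_subtype <| (Set.finite_Icc (-(a : ℤ)) a).subset fun m hm => by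
    have : m.natAbs ≤ a := hm ▸ Nat.le_self_pow two_ne_zero _
    simp only [Set.mem_Icc]
    omega

theorem card_natAbs_sq_eq (a : ℕ) :
    Nat.card {m : ℤ // m.natAbs ^ 2 = a} = if a = 0 then 1 else if IsSquare a then 2 else 0 := by
  by_cases ha : IsSquare a
  · obtain ⟨r, rfl⟩ := ha
    have hroots (m : ℤ) : m.natAbs ^ 2 = r * r ↔ m ∈ ({(r : ℤ), -(r : ℤ)} : Finset ℤ) := by
      rw [← sq, (Nat.pow_left_injective two_ne_zero).eq_iff, Int.natAbs_eq_iff]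
      simp
    rw [Nat.card_congr (Equiv.subtypeEquivRight hroots), Nat.card_eq_fintype_card,
      Fintype.card_coe]
    rcases eq_or_ne r 0 with rfl | hr
    · simp
    · rw [Finset.card_pair (by omega), if_neg (by positivity), if_pos ⟨r, rfl⟩]
  · have : IsEmpty {m : ℤ // m.natAbs ^ 2 = a} :=
      ⟨fun ⟨m, hm⟩ => ha ⟨m.natAbs, by rw [← hm, sq]⟩⟩
    rw [Nat.card_of_isEmpty, if_neg (by rintro rfl; exact ha ⟨0, rfl⟩), if_neg ha]

open Finset in
theorem lt_card_filter_range_iff {P : ℕ → Prop} [DecidablePred P] {B t : ℕ}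
    (hP : ∀ i j, i ≤ j → P j → P i) (hB : ∀ j, P j → j < B) :
    t < #{j ∈ range B | P j} ↔ P t := by
  constructor
  · intro ht
    by_contra hPt
    have hsub : {j ∈ range B | P j} ⊆ range t := fun j hj => mem_range.2 <| by
      by_contra hjt
      exact hPt (hP t j (by omega) (mem_filter.1 hj).2)
    exact absurd (card_le_card hsub) (by rw [card_range]; omega)
  · intro hPt
    have hsub : range (t + 1) ⊆ {j ∈ range B | P j} := fun i hi =>
      mem_filter.2 ⟨mem_range.2 (by have := hB t hPt; simp at hi; omega),
        hP i t (by simp at hi; omega) hPt⟩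
    simpa using card_le_card hsub

theorem card_filter_range_lt {B c : ℕ} (h : c ≤ B) :
    ((Finset.range B).filter fun j => j < c).card = c := by
  rw [Finset.range_eq_Ico, Finset.Ico_filter_lt]
  simp [h]

namespace Multiset

/-- The length of column `t` of the Young diagram of `s`. -/
def countGe (s : Multiset ℕ) (t : ℕ) : ℕ := s.countP (t ≤ ·)

theorem countGe_zero (s : Multiset ℕ) : s.countGe 0 = card s :=
  countP_eq_card.2 fun a _ => Nat.zero_le a

theorem countGe_le_card (s : Multiset ℕ) (t : ℕ) : s.countGe t ≤ card s :=
  countP_le_card _ _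

theorem countGe_antitone (s : Multiset ℕ) : Antitone s.countGe :=
  fun _ _ h => by
    simp only [countGe, countP_eq_card_filter]
    exact card_le_card (s.monotone_filter_right fun _ => h.trans)

theorem countGe_eq_count_add (s : Multiset ℕ) (a : ℕ) :
    s.countGe a = s.count a + s.countGe (a + 1) := by
  induction s using Multiset.induction with
  | empty => simp [countGe]
  | cons b s ih =>
    simp only [countGe, countP_cons, count_cons] at ih ⊢
    split_ifs <;> omega

theorem countGe_add (s t : Multiset ℕ) (u : ℕ) :
    (s + t).countGe u = s.countGe u + t.countGe u :=
  countP_add _ _ _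

theorem ext_countGe {s s' : Multiset ℕ} (hc : card s = card s')
    (h : ∀ t, 0 < t → s.countGe t = s'.countGe t) : s = s' := by
  have hall (t : ℕ) : s.countGe t = s'.countGe t := by
    rcases Nat.eq_zero_or_pos t with rfl | ht
    · rwa [countGe_zero, countGe_zero]
    · exact h t ht
  ext a
  have := countGe_eq_count_add s a
  have := countGe_eq_count_add s' a
  have := hall a
  have := hall (a + 1)
  omega

theorem exists_lt_of_lt_sup {s : Multiset ℕ} {j : ℕ} (h : j < s.sup) : ∃ x ∈ s, j < x := by
  by_contra! hle
  exact h.not_ge (sup_le.2 hle)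

/-- The lengths of the first `l` columns of the Young diagram of `s`. -/
def conjPad (l : ℕ) (s : Multiset ℕ) : Multiset ℕ := (range l).map fun j => s.countGe (j + 1)

/-- The conjugate partition; zero parts of `s` are ignored. -/
def conj (s : Multiset ℕ) : Multiset ℕ := conjPad s.sup s

theorem card_conjPad (l : ℕ) (s : Multiset ℕ) : card (conjPad l s) = l := by
  simp [conjPad]

theorem countGe_conjPad (l : ℕ) (s : Multiset ℕ) (t : ℕ) :
    (conjPad l s).countGe t =
      ((Finset.range l).filter fun j => t ≤ s.countGe (j + 1)).card := by
  rw [countGe, conjPad, countP_map]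
  rfl

theorem lt_countGe_conjPad_iff {l : ℕ} {s : Multiset ℕ} (hs : s.sup ≤ l) {t c : ℕ}
    (hc : 0 < c) :
    t < (conjPad l s).countGe c ↔ c ≤ s.countGe (t + 1) := by
  rw [countGe_conjPad, lt_card_filter_range_iff]
  · exact fun i j hij h => h.trans (s.countGe_antitone (by omega))
  · intro j hj
    obtain ⟨x, hx, hjx⟩ := countP_pos.1 (hc.trans_le hj)
    exact (Nat.lt_of_succ_le hjx).trans_le ((le_sup hx).trans hs)

theorem conjPad_congr {s s' : Multiset ℕ} (h : ∀ t, 0 < t → s.countGe t = s'.countGe t)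
    (l : ℕ) :
    conjPad l s = conjPad l s' :=
  map_congr rfl fun j _ => h (j + 1) j.succ_pos

theorem conjPad_card_conj (s : Multiset ℕ) : conjPad (card s) (conj s) = s := by
  refine ext_countGe (card_conjPad _ _) fun t ht => ?_
  obtain ⟨t, rfl⟩ := Nat.exists_eq_add_one_of_ne_zero ht.ne'
  have hiff (j : ℕ) : t + 1 ≤ (conj s).countGe (j + 1) ↔ j < s.countGe (t + 1) :=
    lt_countGe_conjPad_iff le_rfl j.succ_pos
  rw [countGe_conjPad, Finset.filter_congr fun j _ => hiff j,
    card_filter_range_lt (countGe_le_card _ _)]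

theorem sup_conjPad {l : ℕ} {s : Multiset ℕ} (hs : ∀ x ∈ s, 0 < x) (hl : 0 < l) :
    (conjPad l s).sup = card s := by
  refine le_antisymm (sup_le.2 fun x hx => ?_) (le_sup ?_)
  · obtain ⟨j, -, rfl⟩ := mem_map.1 hx
    exact countGe_le_card _ _
  · rw [← countP_eq_card.2 hs]
    exact mem_map.2 ⟨0, mem_range.2 hl, rfl⟩

theorem conj_conjPad {l : ℕ} {s : Multiset ℕ} (hs : ∀ x ∈ s, 0 < x ∧ x ≤ l) :
    conj (conjPad l s) = s := by
  rcases Nat.eq_zero_or_pos l with rfl | hl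
  · obtain rfl : s = 0 := eq_zero_of_forall_notMem fun x hx => by have := hs x hx; omega
    rfl
  have hsup : s.sup ≤ l := sup_le.2 fun x hx => (hs x hx).2
  have hprofile (t : ℕ) (ht : 0 < t) : (conjPad l s).countGe t = (conj s).countGe t :=
    eq_of_forall_lt_iff fun c => by
      rw [lt_countGe_conjPad_iff hsup ht, conj, lt_countGe_conjPad_iff le_rfl ht]
  rw [conj, sup_conjPad (fun x hx => (hs x hx).1) hl, conjPad_congr hprofile, conjPad_card_conj]

theorem sum_range_countGe_succ {l : ℕ} {s : Multiset ℕ} (hs : ∀ x ∈ s, x ≤ l) :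
    ∑ j ∈ Finset.range l, s.countGe (j + 1) = s.sum := by
  induction s using Multiset.induction with
  | empty => simp [countGe]
  | cons a s ih =>
    have hcons (j : ℕ) :
        (a ::ₘ s).countGe (j + 1) = s.countGe (j + 1) + if j < a then 1 else 0 := by
      simp only [countGe, countP_cons, Nat.succ_le_iff]
    have ha : a ≤ l := hs a (mem_cons_self a s)
    rw [Finset.sum_congr rfl fun j _ => hcons j, Finset.sum_add_distrib, Finset.sum_boole,
      ih fun x hx => hs x (mem_cons_of_mem hx), card_filter_range_lt ha, sum_cons, add_comm]
    simp

theorem sum_conjPad {l : ℕ} {s : Multiset ℕ} (hs : s.sup ≤ l) : (conjPad l s).sum = s.sum := by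
  rw [← sum_range_countGe_succ fun x hx => (le_sup hx).trans hs]
  rfl

theorem sum_conj (s : Multiset ℕ) : (conj s).sum = s.sum := sum_conjPad le_rfl

theorem pos_of_mem_conj {s : Multiset ℕ} {x : ℕ} (hx : x ∈ conj s) : 0 < x := by
  obtain ⟨j, hj, rfl⟩ := mem_map.1 (by rwa [conj, conjPad] at hx)
  obtain ⟨y, hy, hjy⟩ := exists_lt_of_lt_sup (mem_range.1 hj)
  exact countP_pos_of_mem hy hjy

theorem le_card_of_mem_conj {s : Multiset ℕ} {x : ℕ} (hx : x ∈ conj s) : x ≤ card s := by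
  obtain ⟨j, -, rfl⟩ := mem_map.1 (by rwa [conj, conjPad] at hx)
  exact countGe_le_card _ _

end Multiset

namespace List

/-- `addStaircase c [a₀, a₁, …] = [2 * a₀ + c, 2 * a₁ + c + 2, …]`. -/
def addStaircase : ℕ → List ℕ → List ℕ
  | _, [] => []
  | c, a :: l => (2 * a + c) :: addStaircase (c + 2) l

def subStaircase : ℕ → List ℕ → List ℕ
  | _, [] => []
  | c, x :: l => (x - c) / 2 :: subStaircase (c + 2) l

theorem sum_addStaircase (c : ℕ) (l : List ℕ) :
    (addStaircase c l).sum + l.length = 2 * l.sum + c * l.length + l.length ^ 2 := by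
  induction l generalizing c with
  | nil => rfl
  | cons a l ih =>
    have := ih (c + 2)
    simp only [addStaircase, sum_cons, length_cons]
    linarith

theorem exists_eq_of_mem_addStaircase {c x : ℕ} {l : List ℕ} (hx : x ∈ addStaircase c l) :
    ∃ b ∈ l, ∃ d ≥ b, x = 2 * d + c := by
  induction l generalizing c with
  | nil => simp [addStaircase] at hx
  | cons a l ih =>
    rcases mem_cons.1 hx with rfl | hx
    · exact ⟨a, mem_cons_self, a, le_rfl, rfl⟩
    · obtain ⟨b, hb, d, hdb, rfl⟩ := ih hx
      exact ⟨b, mem_cons_of_mem a hb, d + 1, by omega, by ring⟩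

theorem pairwise_lt_addStaircase {c : ℕ} {l : List ℕ} (hl : l.Pairwise (· ≤ ·)) :
    (addStaircase c l).Pairwise (· < ·) := by
  induction l generalizing c with
  | nil => exact .nil
  | cons a l ih =>
    refine pairwise_cons.2 ⟨fun x hx => ?_, ih (pairwise_cons.1 hl).2⟩
    obtain ⟨b, hb, d, hdb, rfl⟩ := exists_eq_of_mem_addStaircase hx
    have := (pairwise_cons.1 hl).1 b hb
    omega

theorem subStaircase_addStaircase (c : ℕ) (l : List ℕ) :
    subStaircase c (addStaircase c l) = l := by
  induction l generalizing c with
  | nil => rfl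
  | cons a l ih => simp only [addStaircase, subStaircase, ih, cons.injEq, and_true]; omega

def IsStaircaseShaped (c : ℕ) (l : List ℕ) : Prop :=
  l.Pairwise (· < ·) ∧ ∀ x ∈ l, ∃ d, x = 2 * d + c

theorem IsStaircaseShaped.tail {c x : ℕ} {l : List ℕ} (h : IsStaircaseShaped c (x :: l)) :
    IsStaircaseShaped (c + 2) l := by
  obtain ⟨hsort, hform⟩ := h
  refine ⟨(pairwise_cons.1 hsort).2, fun y hy => ?_⟩
  obtain ⟨d, rfl⟩ := hform x mem_cons_self
  obtain ⟨e, rfl⟩ := hform y (mem_cons_of_mem _ hy)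
  have := (pairwise_cons.1 hsort).1 _ hy
  exact ⟨e - 1, by omega⟩

theorem addStaircase_subStaircase {c : ℕ} {l : List ℕ} (h : IsStaircaseShaped c l) :
    addStaircase c (subStaircase c l) = l := by
  induction l generalizing c with
  | nil => rfl
  | cons x l ih =>
    obtain ⟨d, rfl⟩ := h.2 x mem_cons_self
    simp only [subStaircase, addStaircase, ih h.tail, cons.injEq, and_true]
    omega

theorem le_of_mem_subStaircase {c b y : ℕ} {l : List ℕ} (h : IsStaircaseShaped c l)
    (hb : ∀ x ∈ l, 2 * b + c ≤ x) (hy : y ∈ subStaircase c l) : b ≤ y := by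
  induction l generalizing c with
  | nil => simp [subStaircase] at hy
  | cons x l ih =>
    rcases mem_cons.1 hy with rfl | hy
    · have := hb x mem_cons_self
      omega
    · refine ih h.tail (fun z hz => ?_) hy
      obtain ⟨d, rfl⟩ := h.2 x mem_cons_self
      obtain ⟨e, rfl⟩ := h.2 z (mem_cons_of_mem _ hz)
      have := (pairwise_cons.1 h.1).1 _ hz
      have := hb _ mem_cons_self
      omega

theorem pairwise_le_subStaircase {c : ℕ} {l : List ℕ} (h : IsStaircaseShaped c l) :
    (subStaircase c l).Pairwise (· ≤ ·) := by
  induction l generalizing c with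
  | nil => exact .nil
  | cons x l ih =>
    refine pairwise_cons.2 ⟨fun y hy => le_of_mem_subStaircase h.tail (fun z hz => ?_) hy,
      ih h.tail⟩
    obtain ⟨d, rfl⟩ := h.2 x mem_cons_self
    obtain ⟨e, rfl⟩ := h.2 z (mem_cons_of_mem _ hz)
    have := (pairwise_cons.1 h.1).1 _ hz
    omega

end List

open List in
theorem isDistinctOdd_addStaircase {l : List ℕ} (hl : l.Pairwise (· ≤ ·)) :
    IsDistinctOdd (addStaircase 1 l : Multiset ℕ) := by
  refine ⟨Multiset.coe_nodup.2 ((pairwise_lt_addStaircase hl).imp ne_of_lt), fun x hx => ?_⟩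
  obtain ⟨-, -, d, -, rfl⟩ := exists_eq_of_mem_addStaircase (Multiset.mem_coe.1 hx)
  exact odd_two_mul_add_one d

theorem isStaircaseShaped_sort {m : Multiset ℕ} (hm : IsDistinctOdd m) :
    List.IsStaircaseShaped 1 m.sort := by
  have hnodup : m.sort.Nodup := Multiset.coe_nodup.1 (by rw [Multiset.sort_eq]; exact hm.1)
  refine ⟨((Multiset.pairwise_sort m _).and hnodup).imp fun h => lt_of_le_of_ne h.1 h.2,
    fun x hx => ?_⟩
  exact hm.2 x (Multiset.mem_sort _ |>.1 hx)

theorem Multiset.sort_coe_of_pairwise {l : List ℕ} (hl : l.Pairwise (· ≤ ·)) :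
    (l : Multiset ℕ).sort = l :=
  List.mergeSort_eq_self _ hl

def staircaseEquiv : Multiset ℕ ≃ {m : Multiset ℕ // IsDistinctOdd m} where
  toFun a := ⟨List.addStaircase 1 a.sort, isDistinctOdd_addStaircase (Multiset.pairwise_sort a _)⟩
  invFun m := List.subStaircase 1 m.val.sort
  left_inv a := by
    have hsorted := (List.pairwise_lt_addStaircase (c := 1) (Multiset.pairwise_sort a _)).imp
      le_of_lt
    simp only
    rw [Multiset.sort_coe_of_pairwise hsorted, List.subStaircase_addStaircase, Multiset.sort_eq]
  right_inv m := by
    have h := isStaircaseShaped_sort m.2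
    ext1
    simp only
    rw [Multiset.sort_coe_of_pairwise (List.pairwise_le_subStaircase h),
      List.addStaircase_subStaircase h, Multiset.sort_eq]

theorem sum_staircaseEquiv (a : Multiset ℕ) :
    (staircaseEquiv a).val.sum = 2 * a.sum + Multiset.card a ^ 2 := by
  have := List.sum_addStaircase 1 a.sort
  rw [Multiset.length_sort] at this
  have hsum : a.sort.sum = a.sum := by rw [← Multiset.sum_coe, Multiset.sort_eq]
  simp only [staircaseEquiv, Equiv.coe_fn_mk, Multiset.sum_coe]
  omega

namespace Multiset

/-- The partition whose Young diagram is a `card a × card b` rectangle with the rows `a` attached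
to its right and the columns `b` attached below it. -/
def durfeeJoin (a b : Multiset ℕ) : Multiset ℕ := (a.map (· + card b) + conj b).filter (0 < ·)

theorem sum_filter_pos (s : Multiset ℕ) : (s.filter (0 < ·)).sum = s.sum := by
  conv_rhs => rw [← sum_filter_add_sum_filter_not (s := s) (0 < ·)]
  rw [left_eq_add]
  exact sum_eq_zero fun x hx => by have := (mem_filter.1 hx).2; omega

theorem countGe_filter_pos (s : Multiset ℕ) {t : ℕ} (ht : 0 < t) :
    (s.filter (0 < ·)).countGe t = s.countGe t := by
  rw [countGe, countP_filter]
  exact countP_congr rfl fun x _ => by simp only [eq_iff_iff]; omega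

theorem countGe_map_add (a : Multiset ℕ) (l t : ℕ) :
    (a.map (· + l)).countGe t = if t ≤ l then card a else a.countGe (t - l) := by
  rw [countGe, countP_map, ← countP_eq_card_filter]
  split_ifs
  · exact countP_eq_card.2 fun x _ => by omega
  · exact countP_congr rfl fun x _ => by simp only [eq_iff_iff]; omega

theorem sum_durfeeJoin (a b : Multiset ℕ) :
    (durfeeJoin a b).sum = a.sum + b.sum + card a * card b := by
  rw [durfeeJoin, sum_filter_pos, sum_add, sum_map_add, sum_conj, map_id', map_const',
    sum_replicate, smul_eq_mul]
  ring

theorem countGe_durfeeJoin (a b : Multiset ℕ) {t : ℕ} (ht : 0 < t) :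
    (durfeeJoin a b).countGe t =
      if t ≤ card b then card a + (conj b).countGe t else a.countGe (t - card b) := by
  rw [durfeeJoin, countGe_filter_pos _ ht, countGe_add, countGe_map_add]
  split_ifs with htb
  · rfl
  · have : (conj b).countGe t = 0 :=
      countP_eq_zero.2 fun x hx => by have := le_card_of_mem_conj hx; omega
    rw [this, add_zero]

/-- The width `l` of the Durfee rectangle of `g` with `l + m` rows and `l` columns: the largest
`l` such that `g` has at least `l + m` parts of size at least `l`. -/
def durfeeWidth (m : ℤ) (g : Multiset ℕ) : ℕ :=
  Nat.findGreatest (fun l => (l : ℤ) + m ≤ g.countGe l) (card g + m.natAbs)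

theorem durfeeWidth_spec (m : ℤ) (g : Multiset ℕ) :
    (durfeeWidth m g = 0 ∨ (durfeeWidth m g : ℤ) + m ≤ g.countGe (durfeeWidth m g)) ∧
      (g.countGe (durfeeWidth m g + 1) : ℤ) < durfeeWidth m g + 1 + m := by
  refine ⟨?_, ?_⟩
  · by_cases h : durfeeWidth m g = 0
    · exact .inl h
    · exact .inr (Nat.findGreatest_of_ne_zero rfl h)
  · by_contra! h
    have := countGe_le_card g (durfeeWidth m g + 1)
    have hk : durfeeWidth m g + 1 ≤ card g + m.natAbs := by omega
    exact Nat.findGreatest_is_greatest (Nat.lt_succ_self (durfeeWidth m g)) hk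
      (by push_cast; omega)

theorem durfeeWidth_eq {m : ℤ} {g : Multiset ℕ} {l : ℕ}
    (hl : l = 0 ∨ (l : ℤ) + m ≤ g.countGe l)
    (hgt : ∀ j, l < j → (g.countGe j : ℤ) < j + m) : durfeeWidth m g = l := by
  have := countGe_le_card g l
  refine Nat.findGreatest_eq_iff.2 ⟨by omega, fun hl0 => hl.resolve_left hl0, fun j hj _ => ?_⟩
  have := hgt j hj
  omega

/-- Inverse to `durfeeJoin` on pairs with `card a - card b = m`. Of the `l + m` rows of the
rectangle, `z` have nothing to their right; they are parts of `g` equal to `l`. -/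
def durfeeSplit (m : ℤ) (g : Multiset ℕ) : Multiset ℕ × Multiset ℕ :=
  let l := durfeeWidth m g
  let z := (l + m).toNat - g.countGe (l + 1)
  ((g.filter (l < ·)).map (· - l) + replicate z 0, conjPad l (g.filter (· ≤ l) - replicate z l))

theorem durfeeWidth_durfeeJoin (a b : Multiset ℕ) :
    durfeeWidth (card a - card b) (durfeeJoin a b) = card b := by
  refine durfeeWidth_eq ?_ fun j hj => ?_
  · rcases Nat.eq_zero_or_pos (card b) with hb | hb
    · exact .inl hb
    · rw [countGe_durfeeJoin _ _ hb, if_pos le_rfl]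
      exact .inr (by push_cast; omega)
  · rw [countGe_durfeeJoin _ _ (by omega), if_neg (by omega)]
    have := countGe_le_card a (j - card b)
    omega

theorem filter_lt_durfeeJoin (a b : Multiset ℕ) :
    (durfeeJoin a b).filter (card b < ·) = (a.filter (0 < ·)).map (· + card b) := by
  have hconj : (conj b).filter (fun x => card b < x ∧ 0 < x) = 0 :=
    filter_eq_nil.2 fun x hx => by have := le_card_of_mem_conj hx; omega
  rw [durfeeJoin, filter_filter, filter_add, filter_map, hconj, add_zero]
  congr 1
  exact filter_congr fun x _ => by simp only [Function.comp_apply]; omega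

theorem filter_le_durfeeJoin (a b : Multiset ℕ) (hb : 0 < card b) :
    (durfeeJoin a b).filter (· ≤ card b) = replicate (a.count 0) (card b) + conj b := by
  have hconj : (conj b).filter (fun x => x ≤ card b ∧ 0 < x) = conj b :=
    filter_eq_self.2 fun x hx => ⟨le_card_of_mem_conj hx, pos_of_mem_conj hx⟩
  have hzero : a.filter ((fun x => x ≤ card b ∧ 0 < x) ∘ (· + card b)) = a.filter (· = 0) :=
    filter_congr fun x _ => by simp only [Function.comp_apply]; omega
  rw [durfeeJoin, filter_filter, filter_add, filter_map, hconj, hzero, filter_eq', map_replicate,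
    zero_add]

theorem durfeeSplit_durfeeJoin (a b : Multiset ℕ) :
    durfeeSplit (card a - card b) (durfeeJoin a b) = (a, b) := by
  have hz : (card b + (card a - card b : ℤ)).toNat - (durfeeJoin a b).countGe (card b + 1) =
      a.count 0 := by
    have := countGe_eq_count_add a 0
    rw [countGe_zero, zero_add] at this
    rw [countGe_durfeeJoin _ _ (Nat.succ_pos _), if_neg (by omega), Nat.succ_eq_add_one,
      Nat.add_sub_cancel_left]
    omega
  simp only [durfeeSplit, durfeeWidth_durfeeJoin, hz, filter_lt_durfeeJoin, map_map]
  refine Prod.ext ?_ ?_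
  · have hzero : a.filter (fun x => ¬0 < x) = replicate (a.count 0) 0 := by
      rw [← filter_eq']
      exact filter_congr fun x _ => by omega
    rw [show ((· - card b) ∘ (· + card b)) = id from funext fun x => by simp, map_id, ← hzero,
      filter_add_not]
  · rcases Nat.eq_zero_or_pos (card b) with hb | hb
    · rw [card_eq_zero.1 hb]
      rfl
    · rw [filter_le_durfeeJoin a b hb, add_tsub_cancel_left, conjPad_card_conj]

theorem card_durfeeSplit (m : ℤ) (g : Multiset ℕ) :
    (card (durfeeSplit m g).1 : ℤ) - card (durfeeSplit m g).2 = m := by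
  obtain ⟨hl, hgt⟩ := durfeeWidth_spec m g
  have hhigh : card (g.filter (durfeeWidth m g < ·)) = g.countGe (durfeeWidth m g + 1) :=
    (countP_eq_card_filter _ _).symm
  simp only [durfeeSplit, card_add, card_map, card_replicate, card_conjPad, hhigh]
  omega

theorem durfeeJoin_durfeeSplit (m : ℤ) {g : Multiset ℕ} (hg : ∀ x ∈ g, 0 < x) :
    durfeeJoin (durfeeSplit m g).1 (durfeeSplit m g).2 = g := by
  obtain ⟨hl, hgt⟩ := durfeeWidth_spec m g
  simp only [durfeeSplit]
  set l := durfeeWidth m g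
  set z := (l + m).toNat - g.countGe (l + 1)
  have hbot : ∀ x ∈ g.filter (· ≤ l) - replicate z l, 0 < x ∧ x ≤ l := fun x hx => by
    have := mem_filter.1 (mem_of_le tsub_le_self hx)
    exact ⟨hg x this.1, this.2⟩
  have hhigh : ((g.filter (l < ·)).map (· - l)).map (· + l) = g.filter (l < ·) := by
    rw [map_map, map_congr rfl fun x hx => ?_, map_id']
    have := (mem_filter.1 hx).2
    simp only [Function.comp_apply]
    omega
  rw [durfeeJoin, card_conjPad, conj_conjPad hbot, map_add, hhigh, map_replicate, zero_add]
  rcases Nat.eq_zero_or_pos l with hl0 | hlpos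
  · have hlow : g.filter (· ≤ l) = 0 := filter_eq_nil.2 fun x hx => by have := hg x hx; omega
    have hzeros : (replicate z l).filter (0 < ·) = 0 :=
      filter_eq_nil.2 fun x hx => by rw [eq_of_mem_replicate hx]; omega
    rw [hlow, zero_tsub, add_zero, filter_add, hzeros, add_zero, filter_filter]
    exact filter_eq_self.2 fun x hx => ⟨hg x hx, by have := hg x hx; omega⟩
  · have hrep : replicate z l ≤ g.filter (· ≤ l) := by
      rw [← le_count_iff_replicate_le, count_filter, if_pos le_rfl]
      have := countGe_eq_count_add g l
      omega
    rw [add_assoc, add_tsub_cancel_of_le hrep,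
      filter_congr (p := (· ≤ l)) (q := fun x => ¬l < x) fun x _ => Nat.not_lt.symm,
      filter_add_not]
    exact filter_eq_self.2 hg

end Multiset

def durfeeEquiv : Multiset ℕ × Multiset ℕ ≃ ℤ × {g : Multiset ℕ // IsPartitionM g} where
  toFun ab := (Multiset.card ab.1 - Multiset.card ab.2,
    ⟨Multiset.durfeeJoin ab.1 ab.2, fun _ hx => (Multiset.mem_filter.1 hx).2⟩)
  invFun p := Multiset.durfeeSplit p.1 p.2
  left_inv ab := Multiset.durfeeSplit_durfeeJoin ab.1 ab.2
  right_inv p := Prod.ext (Multiset.card_durfeeSplit p.1 p.2)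
    (Subtype.ext (Multiset.durfeeJoin_durfeeSplit p.1 p.2.2))

theorem natAbs_sq_add_two_mul_sum_durfeeEquiv (ab : Multiset ℕ × Multiset ℕ) :
    (durfeeEquiv ab).1.natAbs ^ 2 + 2 * (durfeeEquiv ab).2.val.sum =
      (2 * ab.1.sum + Multiset.card ab.1 ^ 2) + (2 * ab.2.sum + Multiset.card ab.2 ^ 2) := by
  simp only [durfeeEquiv, Equiv.coe_fn_mk]
  rw [Multiset.sum_durfeeJoin]
  zify
  rw [sq_abs]
  ring

theorem card_distinctOddPairs (n : ℕ) :
    Nat.card {x : Multiset ℕ × Multiset ℕ //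
        IsDistinctOdd x.1 ∧ IsDistinctOdd x.2 ∧ x.1.sum + x.2.sum = n} =
      Nat.card {p : ℤ × {g : Multiset ℕ // IsPartitionM g} //
        p.1.natAbs ^ 2 + 2 * p.2.val.sum = n} := by
  let e : Multiset ℕ × Multiset ℕ ≃ {x : Multiset ℕ × Multiset ℕ //
      IsDistinctOdd x.1 ∧ IsDistinctOdd x.2} :=
    (staircaseEquiv.prodCongr staircaseEquiv).trans Equiv.subtypeProdEquivProd.symm
  calc _ = Nat.card {y : {x : Multiset ℕ × Multiset ℕ //
        IsDistinctOdd x.1 ∧ IsDistinctOdd x.2} // y.val.1.sum + y.val.2.sum = n} :=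
      Nat.card_congr ((Equiv.subtypeEquivRight fun _ => and_assoc.symm).trans
          (Equiv.subtypeSubtypeEquivSubtypeInter _ _).symm)
    _ = Nat.card {ab : Multiset ℕ × Multiset ℕ //
        (2 * ab.1.sum + Multiset.card ab.1 ^ 2) + (2 * ab.2.sum + Multiset.card ab.2 ^ 2) = n} :=
      Nat.card_congr (e.subtypeEquiv fun ab => by
        simp [e, Equiv.subtypeProdEquivProd, sum_staircaseEquiv]).symm
    _ = _ := Nat.card_congr (durfeeEquiv.subtypeEquiv fun ab => by
        rw [natAbs_sq_add_two_mul_sum_durfeeEquiv])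

theorem Multiset.sum_map_two_mul (g : Multiset ℕ) : (g.map (2 * ·)).sum = 2 * g.sum := by
  rw [Multiset.sum_map_mul_left, Multiset.map_id']

/-- For `j ≤ 2 N` the parts of a partition of `j / 2` are at most `N`. -/
def partitionEquivMultisetOfWeight {N j : ℕ} (hj : j ≤ 2 * N) :
    {g : {g : Multiset ℕ // IsPartitionM g} // 2 * g.val.sum = j} ≃
      MultisetOfWeight (2 * ·) (Finset.Icc 1 N) j :=
  (Equiv.subtypeSubtypeEquivSubtypeInter IsPartitionM (fun g => 2 * g.sum = j)).trans <|
    Equiv.subtypeEquivRight fun g => by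
      rw [Multiset.sum_map_two_mul]
      refine and_congr_left fun hg => forall₂_congr fun a ha => ?_
      have := Multiset.le_sum_of_mem ha
      rw [Finset.mem_Icc]
      omega

instance (j : ℕ) : Finite {g : {g : Multiset ℕ // IsPartitionM g} // 2 * g.val.sum = j} :=
  have := finite_multisetOfWeight (2 * ·) (s := Finset.Icc 1 j)
    (fun a ha => by have := Finset.mem_Icc.1 ha; omega) j
  Finite.of_equiv _ (partitionEquivMultisetOfWeight (N := j) (by omega)).symm

theorem mk_card_distinctOddPairs {R : Type*} [CommSemiring R] :
    (mk fun n => (Nat.card {x : Multiset ℕ × Multiset ℕ //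
        IsDistinctOdd x.1 ∧ IsDistinctOdd x.2 ∧ x.1.sum + x.2.sum = n} : R)) =
      mk (fun i => (Nat.card {m : ℤ // m.natAbs ^ 2 = i} : R)) *
        mk (fun j =>
          (Nat.card {g : {g : Multiset ℕ // IsPartitionM g} // 2 * g.val.sum = j} : R)) := by
  simp only [card_distinctOddPairs]
  exact mk_card_add_eq_mul (fun m : ℤ => m.natAbs ^ 2)
    (fun g : {g : Multiset ℕ // IsPartitionM g} => 2 * g.val.sum)

open Finset in
theorem coeff_mul_eq_of_coeff_eq {R : Type*} [CommSemiring R] {f g g' : R⟦X⟧} {N : ℕ}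
    (h : ∀ i ≤ N, coeff i g = coeff i g') : coeff N (f * g) = coeff N (f * g') := by
  simp only [coeff_mul]
  refine sum_congr rfl fun p hp => ?_
  rw [h p.2 (by have := mem_antidiagonal.1 hp; omega)]

theorem coeff_mk_card_partition_mul_prod {N i : ℕ} (hi : i ≤ N) :
    coeff i ((mk fun j =>
        (Nat.card {g : {g : Multiset ℕ // IsPartitionM g} // 2 * g.val.sum = j} : ℤ)) *
      ∏ k ∈ Finset.Icc 1 N, (1 - X ^ (2 * k))) = coeff i 1 := by
  have hprod := mk_card_multisetOfWeight_mul_prod (R := ℤ) (2 * ·) (s := Finset.Icc 1 N)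
    fun a ha => by have := Finset.mem_Icc.1 ha; omega
  beta_reduce at hprod
  rw [mul_comm, coeff_mul_eq_of_coeff_eq fun j hj => ?_, mul_comm, hprod]
  rw [coeff_mk, coeff_mk, Nat.card_congr (partitionEquivMultisetOfWeight (N := N) (by omega))]

theorem distinct_odd_pairs_gf (N : ℕ) :
    PowerSeries.coeff (R := ℤ) N
      ((PowerSeries.mk fun n => (Nat.card {x : Multiset ℕ × Multiset ℕ //
          IsDistinctOdd x.1 ∧ IsDistinctOdd x.2 ∧ x.1.sum + x.2.sum = n} : ℤ)) *
        ∏ k ∈ Finset.Icc 1 N, (1 - PowerSeries.X ^ (2 * k))) =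
    (if N = 0 then 1 else if IsSquare N then 2 else 0) := by
  rw [mk_card_distinctOddPairs, mul_assoc,
    coeff_mul_eq_of_coeff_eq fun i hi => coeff_mk_card_partition_mul_prod hi, mul_one, coeff_mk,
    card_natAbs_sq_eq]
  split_ifs <;> rfl
end

section
/- For all non-negative integers n, the number of pairs of partitions (λ¹, λ²) with odd parts distinct in each, of total size 3n+2, where each such pair corresponds under the established bijection to a quadruple with λ⁴ of square size, is a multiple of 3; equivalently, the number of quadruples (λ¹, λ², λ³, λ⁴) with λ¹, λ², λ³ partitions into even parts, λ⁴ of size a perfect square counted with multiplicity 2 for positive squares and 1 for zero, and total size 3n+2, is divisible by 3. -/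
/-! Rotating the three even-part partitions, `(λ¹, λ², λ³) ↦ (λ², λ³, λ¹)`, is a permutation of
order 3 of the counted set. A fixed point has `λ¹ = λ² = λ³`, hence total size `3 |λ¹| + k²`,
which is never `≡ 2 (mod 3)`; so every orbit has size 3. -/

namespace Equiv.Perm

theorem prime_dvd_natCard_of_pow_eq_one_of_forall_ne {α : Type*} {p n : ℕ} [Fact p.Prime]
    {σ : Perm α} (hσ : σ ^ p ^ n = 1) (hfree : ∀ a, σ a ≠ a) : p ∣ Nat.card α := by
  cases finite_or_infinite α
  · have := Fintype.ofFinite α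
    by_contra hp
    rw [Nat.card_eq_fintype_card] at hp
    obtain ⟨a, ha⟩ := exists_fixed_point_of_prime hp hσ
    exact hfree a ha
  · simp [Nat.card_eq_zero_of_infinite]

def rotateTriple (α : Type*) : Perm (α × α × α) where
  toFun x := (x.2.1, x.2.2, x.1)
  invFun x := (x.2.2, x.1, x.2.1)
  left_inv _ := rfl
  right_inv _ := rfl

theorem rotateTriple_apply_eq_self {α : Type*} {a b c : α}
    (h : rotateTriple α (a, b, c) = (a, b, c)) : a = b ∧ b = c := by
  simp only [rotateTriple, coe_fn_mk, Prod.mk.injEq] at h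
  exact ⟨h.1.symm, h.2.1.symm⟩

end Equiv.Perm

theorem IsOddStaircase.exists_sum_eq_sq {m : Multiset ℕ} (hm : IsOddStaircase m) :
    ∃ k, m.sum = k ^ 2 := by
  obtain ⟨k, rfl⟩ := hm
  refine ⟨k, ?_⟩
  induction k with
  | zero => simp
  | succ k ih => rw [Multiset.range_succ, Multiset.map_cons, Multiset.sum_cons, ih]; ring

theorem Nat.sq_mod_three_ne_two (k : ℕ) : k ^ 2 % 3 ≠ 2 := by
  rw [Nat.pow_mod]
  have := Nat.mod_lt k three_pos
  interval_cases k % 3 <;> decide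

theorem quadruple_congruence (n : ℕ) :
    3 ∣ Nat.card {x : (Multiset ℕ × Multiset ℕ × Multiset ℕ) × (Multiset ℕ × Bool) //
      IsEvenPartition x.1.1 ∧ IsEvenPartition x.1.2.1 ∧ IsEvenPartition x.1.2.2 ∧
      IsOddStaircase x.2.1 ∧ (x.2.2 = true → x.2.1 ≠ 0) ∧
      x.1.1.sum + x.1.2.1.sum + x.1.2.2.sum + x.2.1.sum = 3 * n + 2} := by
  refine Equiv.Perm.prime_dvd_natCard_of_pow_eq_one_of_forall_ne (p := 3) (n := 1)
    (σ := Equiv.Perm.subtypePerm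
      (Equiv.prodCongr (Equiv.Perm.rotateTriple (Multiset ℕ)) (Equiv.refl (Multiset ℕ × Bool))) ?_)
    rfl ?_
  · rintro ⟨⟨a, b, c⟩, d⟩
    simp only [Equiv.prodCongr_apply, Equiv.Perm.rotateTriple, Equiv.coe_fn_mk, Prod.map,
      Equiv.refl_apply]
    constructor
    · rintro ⟨hb, hc, ha, hd, hz, hsum⟩
      exact ⟨ha, hb, hc, hd, hz, by omega⟩
    · rintro ⟨ha, hb, hc, hd, hz, hsum⟩
      exact ⟨hb, hc, ha, hd, hz, by omega⟩
  · rintro ⟨⟨⟨a, b, c⟩, d, z⟩, hx⟩ hfix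
    obtain ⟨rfl, rfl⟩ := Equiv.Perm.rotateTriple_apply_eq_self (congrArg (·.1.1) hfix)
    obtain ⟨-, -, -, hd, -, hsum⟩ := hx
    obtain ⟨k, hk⟩ := hd.exists_sum_eq_sq
    exact Nat.sq_mod_three_ne_two k (by simp only at hsum hk; omega)
end

section
/- For N not divisible by 3, the number of ordered triples (λ¹, λ², λ³) of arbitrary partitions with |λ¹| + |λ²| + |λ³| = N is divisible by 3. -/
/-! Cyclically rotating the three coordinates is an action of a group of order 3 on the
triples of size `N`. A fixed triple has three equal coordinates, so its size is divisible by 3;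
hence for `3 ∤ N` every orbit has exactly three elements. -/

theorem Function.End.prime_dvd_natCard_of_pow_eq_one_of_forall_ne {α : Type*} {p : ℕ}
    [Fact p.Prime] {f : Function.End α} (hf : f ^ p = 1) (hfix : ∀ a, f a ≠ a) :
    p ∣ Nat.card α := by
  cases finite_or_infinite α
  · classical
    have := Fintype.ofFinite α
    have hmod := Equiv.Perm.card_fixedPoints_modEq (n := 1) (by rwa [pow_one])
    have hempty : IsEmpty (Function.fixedPoints f) := ⟨fun a => hfix a a.2⟩
    rw [Nat.card_eq_fintype_card, ← Nat.modEq_zero_iff_dvd]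
    simpa using hmod
  · rw [Nat.card_eq_zero_of_infinite]
    exact dvd_zero p

section WeightedTriples

variable {α : Type*} (P : α → Prop) (w : α → ℕ) (N : ℕ)

abbrev WeightedTriples :=
  {t : α × α × α // P t.1 ∧ P t.2.1 ∧ P t.2.2 ∧ w t.1 + w t.2.1 + w t.2.2 = N}

def WeightedTriples.rotate : Function.End (WeightedTriples P w N) := fun t =>
  ⟨(t.1.2.1, t.1.2.2, t.1.1), t.2.2.1, t.2.2.2.1, t.2.1, by
    have := t.2.2.2.2; dsimp only; omega⟩

theorem WeightedTriples.rotate_pow_three : rotate P w N ^ 3 = 1 := rfl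

variable {P w N}

theorem WeightedTriples.three_dvd_of_rotate_eq {t : WeightedTriples P w N}
    (ht : rotate P w N t = t) : 3 ∣ N := by
  rcases t with ⟨⟨a, b, c⟩, _, _, _, hsum⟩
  obtain ⟨rfl, rfl, -⟩ : b = a ∧ c = b ∧ a = c := by simpa [rotate] using ht
  exact ⟨w c, by dsimp only at hsum; omega⟩

theorem three_dvd_card_weightedTriples (hN : ¬ 3 ∣ N) : 3 ∣ Nat.card (WeightedTriples P w N) :=
  have : Fact (Nat.Prime 3) := ⟨Nat.prime_three⟩
  Function.End.prime_dvd_natCard_of_pow_eq_one_of_forall_ne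
    (WeightedTriples.rotate_pow_three P w N) fun _ ht =>
      hN (WeightedTriples.three_dvd_of_rotate_eq ht)

end WeightedTriples

theorem partition_triples_congruence (N : ℕ) (h : ¬ 3 ∣ N) :
    3 ∣ Nat.card {t : Multiset ℕ × Multiset ℕ × Multiset ℕ //
      IsPartitionM t.1 ∧ IsPartitionM t.2.1 ∧ IsPartitionM t.2.2 ∧
      t.1.sum + t.2.1.sum + t.2.2.sum = N} :=
  three_dvd_card_weightedTriples h
end
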